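/- Let n ≥ 1, 0 ≤ β < α ≤ 1, and let p, b, k be integers with 1 ≤ p ≤ b ≤ n and 1 ≤ k ≤ n/b. Let C^{(p)} be the n×n matrix obtained from C_{α,β} by zeroing all entries below the p-th diagonal, i.e., (C^{(p)})[i,j] = c_{i−j} if 0 ≤ i−j < p and 0 otherwise. Then sens_{k,b}(C^{(p)})² ≤ k · Σ_{j=0}^{p−1} c_j². Moreover, if α = 1 then sens_{k,b}(C^{(p)})² ≤ k·(1 + log p)/(1 − β)², where log is the natural logarithm. -/

import Mathlib

/-!
When `p ≤ b`, two columns of `C^{(p)}` whose indices differ by at least `b` have disjoint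
supports, so on a `b`-separated set `π` the Gram matrix `CᵀC` is diagonal and the quadratic form
is a sum of `|π| ≤ k` squared column norms, each at most `Σ_{j<p} c_j²`. For `α = 1`, the
inequality `r_{m-i} r_i ≤ r_m` gives `c_m ≤ r_m Σ_i β^i ≤ r_m / (1 - β)`, and `r_m² ≤ 1/(m+1)`
turns `Σ_{j<p} c_j²` into a harmonic sum, which is at most `1 + log p`.
-/

open Finset Matrix

/-- `r_m = (1/4^m)·C(2m,m)`. -/
noncomputable def rCoef (m : ℕ) : ℝ := (1 / 4 ^ m) * (Nat.choose (2 * m) m : ℝ)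

/-- `c_m = Σ_{i=0}^{m} α^{m−i} r_{m−i} r_i β^i`. -/
noncomputable def cCoef (α β : ℝ) (m : ℕ) : ℝ :=
  ∑ i ∈ Finset.range (m + 1), α ^ (m - i) * rCoef (m - i) * rCoef i * β ^ i

/-- The `p`-banded square root factor `C^{(p)}`: the lower triangular Toeplitz matrix with
entries `c_{i−j}` for `0 ≤ i−j < p` and `0` otherwise. -/
noncomputable def CmatBanded (n p : ℕ) (α β : ℝ) : Matrix (Fin n) (Fin n) ℝ :=
  Matrix.of fun i j =>
    if (j : ℕ) ≤ (i : ℕ) ∧ (i : ℕ) - (j : ℕ) < p then cCoef α β ((i : ℕ) - (j : ℕ)) else 0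

/-- The `b`-min-separated `L2`-sensitivity with at most `k` participations. -/
noncomputable def sens (n b k : ℕ) (C : Matrix (Fin n) (Fin n) ℝ) : ℝ :=
  Real.sqrt (sSup { x : ℝ | ∃ π : Finset (Fin n), π.card ≤ k ∧
    (∀ i ∈ π, ∀ j ∈ π, i ≠ j → b ≤ Nat.dist (i : ℕ) (j : ℕ)) ∧
    x = ∑ i ∈ π, ∑ j ∈ π, (Cᵀ * C) i j })

lemma rCoef_nonneg (m : ℕ) : 0 ≤ rCoef m := by unfold rCoef; positivity

lemma rCoef_succ (m : ℕ) : rCoef (m + 1) = rCoef m * ((2 * m + 1) / (2 * m + 2)) := by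
  have h : ((m : ℝ) + 1) * (m + 1).centralBinom = 2 * (2 * m + 1) * m.centralBinom := by
    exact_mod_cast Nat.succ_mul_centralBinom_succ m
  simp only [rCoef, ← Nat.centralBinom_eq_two_mul_choose]
  field_simp
  linear_combination (2 * (4 : ℝ) ^ m) * h

lemma rCoef_mul_le (i j : ℕ) : rCoef i * rCoef j ≤ rCoef (i + j) := by
  induction j with
  | zero => simp [rCoef]
  | succ q ih =>
    have hratio : ((2 * q + 1) / (2 * q + 2) : ℝ) ≤ (2 * ↑(i + q) + 1) / (2 * ↑(i + q) + 2) := by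
      rw [div_le_div_iff₀ (by positivity) (by positivity)]
      push_cast
      nlinarith [(i.cast_nonneg : (0 : ℝ) ≤ i)]
    rw [← add_assoc, rCoef_succ, rCoef_succ, ← mul_assoc]
    exact mul_le_mul ih hratio (by positivity) (rCoef_nonneg _)

lemma rCoef_sq_le (m : ℕ) : rCoef m ^ 2 ≤ ((m : ℝ) + 1)⁻¹ := by
  induction m with
  | zero => simp [rCoef]
  | succ q ih =>
    have hratio : ((2 * q + 1) / (2 * q + 2) : ℝ) ^ 2 * ((q : ℝ) + 1)⁻¹ ≤ ((q : ℝ) + 1 + 1)⁻¹ := by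
      rw [div_pow, ← div_eq_mul_inv, div_div, inv_eq_one_div,
        div_le_div_iff₀ (by positivity) (by positivity)]
      nlinarith [(q.cast_nonneg : (0 : ℝ) ≤ q)]
    calc rCoef (q + 1) ^ 2 = ((2 * q + 1) / (2 * q + 2) : ℝ) ^ 2 * rCoef q ^ 2 := by
          rw [rCoef_succ]; ring
      _ ≤ ((2 * q + 1) / (2 * q + 2) : ℝ) ^ 2 * ((q : ℝ) + 1)⁻¹ := by gcongr
      _ ≤ ((q + 1 : ℕ) + 1 : ℝ)⁻¹ := by push_cast; exact hratio

lemma cCoef_nonneg {α β : ℝ} (hα : 0 ≤ α) (hβ : 0 ≤ β) (m : ℕ) : 0 ≤ cCoef α β m :=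
  sum_nonneg fun i _ => by have := rCoef_nonneg (m - i); have := rCoef_nonneg i; positivity

lemma cCoef_one_le {β : ℝ} (hβ : 0 ≤ β) (hβ1 : β < 1) (m : ℕ) :
    cCoef 1 β m ≤ rCoef m / (1 - β) := by
  have hterm : ∀ i ∈ range (m + 1),
      1 ^ (m - i) * rCoef (m - i) * rCoef i * β ^ i ≤ rCoef m * β ^ i := by
    intro i hi
    have h := rCoef_mul_le (m - i) i
    rw [Nat.sub_add_cancel (Nat.lt_succ_iff.mp (mem_range.mp hi))] at h
    rw [one_pow, one_mul]
    exact mul_le_mul_of_nonneg_right h (pow_nonneg hβ i)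
  calc cCoef 1 β m ≤ ∑ i ∈ range (m + 1), rCoef m * β ^ i := sum_le_sum hterm
    _ = rCoef m * ∑ i ∈ Ico 0 (m + 1), β ^ i := by rw [← mul_sum, range_eq_Ico]
    _ ≤ rCoef m * (β ^ 0 / (1 - β)) :=
        mul_le_mul_of_nonneg_left (geom_sum_Ico_le_of_lt_one hβ hβ1) (rCoef_nonneg m)
    _ = rCoef m / (1 - β) := by rw [pow_zero, mul_one_div]

lemma sum_range_inv_le_one_add_log (p : ℕ) :
    ∑ j ∈ range p, ((j : ℝ) + 1)⁻¹ ≤ 1 + Real.log p := by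
  simpa [harmonic] using harmonic_le_one_add_log p

lemma sum_cCoef_one_sq_le {β : ℝ} (hβ : 0 ≤ β) (hβ1 : β < 1) (p : ℕ) :
    ∑ j ∈ range p, cCoef 1 β j ^ 2 ≤ (1 + Real.log p) / (1 - β) ^ 2 := by
  have hterm : ∀ j ∈ range p, cCoef 1 β j ^ 2 ≤ ((j : ℝ) + 1)⁻¹ / (1 - β) ^ 2 := fun j _ =>
    calc cCoef 1 β j ^ 2 ≤ (rCoef j / (1 - β)) ^ 2 :=
          pow_le_pow_left₀ (cCoef_nonneg zero_le_one hβ j) (cCoef_one_le hβ hβ1 j) 2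
      _ = rCoef j ^ 2 / (1 - β) ^ 2 := div_pow _ _ _
      _ ≤ ((j : ℝ) + 1)⁻¹ / (1 - β) ^ 2 := by gcongr; exact rCoef_sq_le j
  calc ∑ j ∈ range p, cCoef 1 β j ^ 2 ≤ ∑ j ∈ range p, ((j : ℝ) + 1)⁻¹ / (1 - β) ^ 2 :=
        sum_le_sum hterm
    _ = (∑ j ∈ range p, ((j : ℝ) + 1)⁻¹) / (1 - β) ^ 2 := (sum_div _ _ _).symm
    _ ≤ (1 + Real.log p) / (1 - β) ^ 2 := by gcongr; exact sum_range_inv_le_one_add_log p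

theorem sens_sq_le_of_gram {n : ℕ} (b k : ℕ) (C : Matrix (Fin n) (Fin n) ℝ) {s : ℝ} (hs : 0 ≤ s)
    (hoff : ∀ i j : Fin n, i ≠ j → b ≤ Nat.dist i j → (Cᵀ * C) i j = 0)
    (hdiag : ∀ i, (Cᵀ * C) i i ≤ s) :
    sens n b k C ^ 2 ≤ k * s := by
  have hks : 0 ≤ (k : ℝ) * s := by positivity
  unfold sens
  calc √(sSup _) ^ 2 ≤ √(k * s) ^ 2 := by
        gcongr
        refine Real.sSup_le ?_ hks
        rintro x ⟨π, hcard, hsep, rfl⟩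
        calc ∑ i ∈ π, ∑ j ∈ π, (Cᵀ * C) i j = ∑ i ∈ π, (Cᵀ * C) i i :=
              sum_congr rfl fun i hi => sum_eq_single_of_mem i hi fun j hj hji =>
                hoff i j hji.symm (hsep i hi j hj hji.symm)
          _ ≤ ∑ _i ∈ π, s := sum_le_sum fun i _ => hdiag i
          _ = π.card * s := by rw [sum_const, nsmul_eq_mul]
          _ ≤ k * s := mul_le_mul_of_nonneg_right (by exact_mod_cast hcard) hs
    _ = k * s := Real.sq_sqrt hks

lemma transpose_mul_CmatBanded_apply_eq_zero {n p b : ℕ} (hpb : p ≤ b) (α β : ℝ) {i j : Fin n}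
    (hij : b ≤ Nat.dist i j) : ((CmatBanded n p α β)ᵀ * CmatBanded n p α β) i j = 0 := by
  rw [mul_apply]
  refine sum_eq_zero fun l _ => ?_
  simp only [transpose_apply, CmatBanded, of_apply]
  rw [Nat.dist] at hij
  split_ifs <;> first | omega | simp

lemma transpose_mul_CmatBanded_apply_self_le (n p : ℕ) (α β : ℝ) (i : Fin n) :
    ((CmatBanded n p α β)ᵀ * CmatBanded n p α β) i i ≤ ∑ d ∈ range p, cCoef α β d ^ 2 := by
  set f : ℕ → ℝ := fun l => if (i : ℕ) ≤ l ∧ l - i < p then cCoef α β (l - i) ^ 2 else 0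
  calc ((CmatBanded n p α β)ᵀ * CmatBanded n p α β) i i = ∑ l : Fin n, f l := by
        rw [mul_apply]
        refine sum_congr rfl fun l _ => ?_
        simp only [f, transpose_apply, CmatBanded, of_apply]
        split_ifs <;> ring
    _ = ∑ l ∈ (range n).filter (fun l => (i : ℕ) ≤ l ∧ l - i < p), cCoef α β (l - i) ^ 2 := by
        rw [Fin.sum_univ_eq_sum_range f n, sum_filter]
    _ ≤ ∑ l ∈ Ico (i : ℕ) (i + p), cCoef α β (l - i) ^ 2 := by
        refine sum_le_sum_of_subset_of_nonneg (fun l hl => ?_) fun _ _ _ => sq_nonneg _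
        simp only [mem_filter, mem_range, mem_Ico] at hl ⊢
        omega
    _ = ∑ d ∈ range p, cCoef α β d ^ 2 := by simp [sum_Ico_eq_sum_range]

theorem sens_CmatBanded_sq_le {n p b : ℕ} (k : ℕ) (hpb : p ≤ b) (α β : ℝ) :
    sens n b k (CmatBanded n p α β) ^ 2 ≤ k * ∑ d ∈ range p, cCoef α β d ^ 2 :=
  sens_sq_le_of_gram b k _ (sum_nonneg fun _ _ => sq_nonneg _)
    (fun _ _ _ hij => transpose_mul_CmatBanded_apply_eq_zero hpb α β hij)
    (transpose_mul_CmatBanded_apply_self_le n p α β)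

theorem banded_sensitivity_bound_general (n p b k : ℕ) (hpb : p ≤ b)
    (α β : ℝ) (hβ : 0 ≤ β) (hβα : β < α) :
    sens n b k (CmatBanded n p α β) ^ 2 ≤ (k : ℝ) * ∑ j ∈ Finset.range p, cCoef α β j ^ 2 ∧
      (α = 1 →
        sens n b k (CmatBanded n p α β) ^ 2 ≤
          (k : ℝ) * (1 + Real.log p) / (1 - β) ^ 2) := by
  refine ⟨sens_CmatBanded_sq_le k hpb α β, fun hα1 => ?_⟩
  subst hα1
  calc sens n b k (CmatBanded n p 1 β) ^ 2 ≤ k * ∑ j ∈ range p, cCoef 1 β j ^ 2 :=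
        sens_CmatBanded_sq_le k hpb 1 β
    _ ≤ k * ((1 + Real.log p) / (1 - β) ^ 2) := by gcongr; exact sum_cCoef_one_sq_le hβ hβα p
    _ = k * (1 + Real.log p) / (1 - β) ^ 2 := (mul_div_assoc _ _ _).symm

/-- `sens_{k,b}(C^{(p)})² ≤ k·Σ_{j=0}^{p−1} c_j²`, and moreover for `α = 1`,
`sens_{k,b}(C^{(p)})² ≤ k·(1 + log p)/(1 − β)²`. -/
theorem banded_sensitivity_bound (n p b k : ℕ) (hn : 1 ≤ n) (hp : 1 ≤ p) (hpb : p ≤ b)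
    (hbn : b ≤ n) (hk : 1 ≤ k) (hkn : k ≤ n / b)
    (α β : ℝ) (hβ : 0 ≤ β) (hβα : β < α) (hα : α ≤ 1) :
    sens n b k (CmatBanded n p α β) ^ 2 ≤ (k : ℝ) * ∑ j ∈ Finset.range p, cCoef α β j ^ 2 ∧
      (α = 1 →
        sens n b k (CmatBanded n p α β) ^ 2 ≤
          (k : ℝ) * (1 + Real.log p) / (1 - β) ^ 2) :=
  banded_sensitivity_bound_general n p b k hpb α β hβ hβα
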